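/- arXiv:math/9912050 — 5 statements merged into one kernel-verified Lean document; each statement's English description precedes it below -/
import Mathlib

section
/- Let β : [a,b] → ℝ³ be a C¹ curve with ‖β'(t)‖ = g(t) > 0, and suppose every unit tangent β'(t)/‖β'(t)‖ lies in the ε-neighborhood U(p, ε) of a fixed point p ∈ S² (spherical distance < ε), with ε < π/2. Then for all t ∈ (a,b], the angle between β(t) − β(a) and p is less than ε; i.e., the curve starting at β(a) is contained in the open solid cone based at β(a) in direction p with half-angle ε. -/
open Set InnerProductGeometry Real
open scoped RealInnerProductSpace

/-- If a C¹ curve `β` has nonvanishing derivative whose direction always makes angle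
less than `ε < π/2` with a fixed unit vector `p`, then for `t ∈ (a,b]` the displacement
`β t − β a` makes angle less than `ε` with `p`: the curve lies in the open solid cone
based at `β a` in direction `p` with half-angle `ε`. -/
theorem curve_in_cone
    (a b ε : ℝ) (hab : a < b) (hε : ε < π / 2)
    (p : EuclideanSpace ℝ (Fin 3)) (hp : ‖p‖ = 1)
    (β β' : ℝ → EuclideanSpace ℝ (Fin 3)) (g : ℝ → ℝ)
    (hderiv : ∀ t ∈ Icc a b, HasDerivWithinAt β (β' t) (Icc a b) t)
    (hg : ∀ t ∈ Icc a b, ‖β' t‖ = g t) (hgpos : ∀ t ∈ Icc a b, 0 < g t)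
    (hcont : ContinuousOn β' (Icc a b))
    (hangle : ∀ t ∈ Icc a b, angle (‖β' t‖⁻¹ • β' t) p < ε) :
    ∀ t ∈ Ioc a b, angle (β t - β a) p < ε := by
  have hε0 : 0 < ε := lt_of_le_of_lt (angle_nonneg _ _) (hangle a ⟨le_rfl, hab.le⟩)
  have hcos : 0 < Real.cos ε := Real.cos_pos_of_mem_Ioo ⟨by linarith [Real.pi_pos], hε⟩
  -- pointwise: ⟪β' s, p⟫ > cos ε * ‖β' s‖
  have key : ∀ s ∈ Icc a b, Real.cos ε * ‖β' s‖ < ⟪β' s, p⟫ := by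
    intro s hs
    have hne : β' s ≠ 0 := by
      intro h
      have := hgpos s hs
      rw [← hg s hs, h, norm_zero] at this
      exact lt_irrefl 0 this
    set u := ‖β' s‖⁻¹ • β' s with hu
    have hnu : ‖u‖ = 1 := by
      rw [hu, norm_smul, norm_inv, norm_norm, inv_mul_cancel₀ (norm_ne_zero_iff.mpr hne)]
    have hcosangle : Real.cos ε < Real.cos (angle u p) := by
      apply Real.strictAntiOn_cos ⟨angle_nonneg _ _, angle_le_pi _ _⟩
        ⟨hε0.le, by linarith [Real.pi_pos]⟩ (hangle s hs)
    have hcu : Real.cos (angle u p) = ⟪u, p⟫ := by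
      rw [cos_angle, hnu, hp]; ring
    have hip : ⟪u, p⟫ = ‖β' s‖⁻¹ * ⟪β' s, p⟫ := by
      rw [hu, real_inner_smul_left]
    have hpos : 0 < ‖β' s‖ := norm_pos_iff.mpr hne
    have : Real.cos ε < ‖β' s‖⁻¹ * ⟪β' s, p⟫ := by rw [← hip, ← hcu]; exact hcosangle
    calc Real.cos ε * ‖β' s‖ < (‖β' s‖⁻¹ * ⟪β' s, p⟫) * ‖β' s‖ := by
          exact mul_lt_mul_of_pos_right this hpos
      _ = ⟪β' s, p⟫ := by field_simp
  intro t ht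
  have hIcc : Icc a t ⊆ Icc a b := Icc_subset_Icc le_rfl ht.2
  have hat : a < t := ht.1
  have hcont' : ContinuousOn β' (Icc a t) := hcont.mono hIcc
  have hcontβ : ContinuousOn β (Icc a b) := fun s hs => (hderiv s hs).continuousWithinAt
  -- FTC: β t - β a = ∫ s in a..t, β' s
  have hint : IntervalIntegrable β' MeasureTheory.volume a t := by
    apply ContinuousOn.intervalIntegrable
    rwa [uIcc_of_le hat.le]
  have hftc : ∫ s in a..t, β' s = β t - β a := by
    apply intervalIntegral.integral_eq_sub_of_hasDeriv_right_of_le hat.le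
      (hcontβ.mono hIcc) _ hint
    intro x hx
    have hx' : x ∈ Icc a b := hIcc (Ioo_subset_Icc_self hx)
    have : HasDerivAt β (β' x) x :=
      (hderiv x hx').hasDerivAt (Icc_mem_nhds hx.1 (lt_of_lt_of_le hx.2 ht.2))
    exact this.hasDerivWithinAt
  set x := β t - β a with hx
  -- inner product identity
  have hinner : ⟪p, x⟫ = ∫ s in a..t, ⟪p, β' s⟫ := by
    rw [← hftc]
    exact ((innerSL ℝ p).intervalIntegral_comp_comm hint).symm
  -- norm bound
  have hnormle : ‖x‖ ≤ ∫ s in a..t, ‖β' s‖ := by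
    rw [← hftc]
    exact intervalIntegral.norm_integral_le_integral_norm hat.le
  -- strict inequality of integrals
  have hstrict : Real.cos ε * ∫ s in a..t, ‖β' s‖ < ∫ s in a..t, ⟪p, β' s⟫ := by
    have h1 : ∫ s in a..t, Real.cos ε * ‖β' s‖ = Real.cos ε * ∫ s in a..t, ‖β' s‖ := by
      rw [intervalIntegral.integral_const_mul]
    rw [← h1]
    apply intervalIntegral.integral_lt_integral_of_continuousOn_of_le_of_exists_lt hat
      (continuousOn_const.mul hcont'.norm) ((ContinuousLinearMap.continuous (innerSL ℝ p)).comp_continuousOn hcont')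
    · intro s hs
      have hs' : s ∈ Icc a b := hIcc (Ioc_subset_Icc_self hs)
      have := key s hs'
      rw [real_inner_comm] at this
      exact this.le
    · refine ⟨a, ⟨le_rfl, hat.le⟩, ?_⟩
      have := key a ⟨le_rfl, hab.le⟩
      rw [real_inner_comm] at this
      exact this
  have hxinner : Real.cos ε * ‖x‖ < ⟪p, x⟫ := by
    calc Real.cos ε * ‖x‖ ≤ Real.cos ε * ∫ s in a..t, ‖β' s‖ :=
          mul_le_mul_of_nonneg_left hnormle hcos.le
      _ < ∫ s in a..t, ⟪p, β' s⟫ := hstrict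
      _ = ⟪p, x⟫ := hinner.symm
  have hxne : x ≠ 0 := by
    intro h
    rw [h, inner_zero_right, norm_zero, mul_zero] at hxinner
    exact lt_irrefl 0 hxinner
  have hxpos : 0 < ‖x‖ := norm_pos_iff.mpr hxne
  have hcosx : Real.cos ε < Real.cos (angle x p) := by
    rw [cos_angle, hp, mul_one, lt_div_iff₀ hxpos, real_inner_comm]
    exact hxinner
  by_contra h
  push_neg at h
  have : Real.cos (angle x p) ≤ Real.cos ε :=
    Real.strictAntiOn_cos.antitoneOn ⟨hε0.le, by linarith [Real.pi_pos]⟩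
      ⟨angle_nonneg _ _, angle_le_pi _ _⟩ h
  linarith
end

section
/- Let N > 0, u₀ ∈ ℝ³ with ‖u₀‖ < N, and let β : [c,b] → ℝ³ be a C¹ curve with β(c) = u₀, whose unit tangent α(t) = β'(t)/‖β'(t)‖ makes angle at most 2ε with the direction β(t) − u₀ whenever β(t) ≠ u₀, where ε < π/8. Then at every t with ‖β(t)‖ ≥ 10N, the angle θ(t) between β(t) and β'(t) satisfies cos θ(t) ≥ 0.9·cos(2ε) − 0.1 > 1/2, hence θ(t) < π/3. -/
open Set InnerProductGeometry Real

/-!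
Write `β t = (β t - u₀) + u₀`. The tangent is within angle `2ε` of `β t - u₀`, whose length is at
least `0.9 ‖β t‖`, while `u₀` has length at most `0.1 ‖β t‖` and can lower `⟪β t, β' t⟫` by at
most `‖u₀‖ ‖β' t‖`. Hence `⟪β t, β' t⟫ ≥ (0.9 cos 2ε - 0.1) ‖β t‖ ‖β' t‖`, and `2ε < π/4` makes
the factor exceed `1/2 = cos (π/3)`.
-/

namespace InnerProductGeometry

variable {V : Type*} [NormedAddCommGroup V] [InnerProductSpace ℝ V]

lemma cos_mul_norm_mul_norm_le_inner_of_angle_le {v w : V} {θ : ℝ} (hθ : θ ≤ π)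
    (h : angle v w ≤ θ) : cos θ * (‖v‖ * ‖w‖) ≤ inner ℝ v w := by
  rw [← cos_angle_mul_norm_mul_norm]
  gcongr
  exact cos_le_cos_of_nonneg_of_le_pi (angle_nonneg v w) hθ h

lemma real_inner_ge_of_angle_sub_le {x u v : V} {θ δ : ℝ} (hθ : θ ≤ π) (hcos : 0 ≤ cos θ)
    (h : angle v (x - u) ≤ θ) (hu : ‖u‖ ≤ δ * ‖x‖) :
    (cos θ * (1 - δ) - δ) * (‖x‖ * ‖v‖) ≤ inner ℝ x v := by
  have hsplit : inner ℝ x v = inner ℝ v (x - u) + inner ℝ v u := by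
    rw [real_inner_comm, ← inner_add_right, sub_add_cancel]
  have hfar : (1 - δ) * ‖x‖ ≤ ‖x - u‖ := by linarith [norm_sub_norm_le x u]
  have hmain := cos_mul_norm_mul_norm_le_inner_of_angle_le hθ h
  have hnear : -(‖v‖ * ‖u‖) ≤ inner ℝ v u := neg_le_of_abs_le (abs_real_inner_le_norm v u)
  calc (cos θ * (1 - δ) - δ) * (‖x‖ * ‖v‖)
      = cos θ * (‖v‖ * ((1 - δ) * ‖x‖)) - ‖v‖ * (δ * ‖x‖) := by ring
    _ ≤ cos θ * (‖v‖ * ‖x - u‖) - ‖v‖ * ‖u‖ := by gcongr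
    _ ≤ inner ℝ x v := by linarith

lemma cos_angle_ge_of_angle_sub_le {x u v : V} {θ δ : ℝ} (hx : x ≠ 0) (hv : v ≠ 0)
    (hθ : θ ≤ π) (hcos : 0 ≤ cos θ) (h : angle v (x - u) ≤ θ) (hu : ‖u‖ ≤ δ * ‖x‖) :
    cos θ * (1 - δ) - δ ≤ cos (angle x v) := by
  rw [cos_angle, le_div_iff₀ (by positivity)]
  exact real_inner_ge_of_angle_sub_le hθ hcos h hu

lemma angle_lt_of_cos_lt_cos_angle {x y : V} {φ : ℝ} (hφ : 0 ≤ φ)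
    (h : cos φ < cos (angle x y)) : angle x y < φ := by
  by_contra! hle
  exact h.not_ge (cos_le_cos_of_nonneg_of_le_pi hφ (angle_le_pi x y) hle)

end InnerProductGeometry

lemma one_half_lt_nine_tenths_mul_cos_two_mul_sub {ε : ℝ} (hε : 0 < ε) (hε' : ε < π / 8) :
    (1 : ℝ) / 2 < 0.9 * cos (2 * ε) - 0.1 := by
  have hcos : √2 / 2 < cos (2 * ε) := by
    rw [← cos_pi_div_four]
    exact cos_lt_cos_of_nonneg_of_le_pi (by linarith) (by linarith [pi_pos]) (by linarith)
  have hsqrt : (4 : ℝ) / 3 < √2 := by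
    rw [lt_sqrt (by norm_num)]
    norm_num
  linarith

theorem cone_angle_estimate_general
    (c b N ε : ℝ) (hε : 0 < ε) (hε' : ε < π / 8)
    (u₀ : EuclideanSpace ℝ (Fin 3)) (hu₀ : ‖u₀‖ < N)
    (β β' : ℝ → EuclideanSpace ℝ (Fin 3))
    (hβ'ne : ∀ t ∈ Icc c b, β' t ≠ 0)
    (hangle : ∀ t ∈ Icc c b, β t ≠ u₀ → angle (β' t) (β t - u₀) ≤ 2 * ε) :
    ∀ t ∈ Icc c b, 10 * N ≤ ‖β t‖ →
      0.9 * Real.cos (2 * ε) - 0.1 ≤ Real.cos (angle (β t) (β' t)) ∧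
      (1 : ℝ) / 2 < 0.9 * Real.cos (2 * ε) - 0.1 ∧
      angle (β t) (β' t) < π / 3 := by
  intro t ht hfar
  have hbound := one_half_lt_nine_tenths_mul_cos_two_mul_sub hε hε'
  have hu : ‖u₀‖ ≤ 0.1 * ‖β t‖ := by linarith
  have hβ : β t ≠ 0 := norm_pos_iff.mp (by linarith [norm_nonneg u₀])
  have hβu : β t ≠ u₀ := fun h => by rw [h] at hfar; linarith [norm_nonneg u₀]
  have hcos : 0.9 * cos (2 * ε) - 0.1 ≤ cos (angle (β t) (β' t)) := by
    have := cos_angle_ge_of_angle_sub_le hβ (hβ'ne t ht) (by linarith [pi_pos])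
      (by linarith) (hangle t ht hβu) hu
    linarith
  refine ⟨hcos, hbound, angle_lt_of_cos_lt_cos_angle (by positivity) ?_⟩
  rw [cos_pi_div_three]
  linarith

/-- Key estimate of Lemma 5: if a C¹ curve starts at `u₀` with `‖u₀‖ < N` and its unit
tangent always makes angle at most `2ε` (`0 < ε < π/8`) with the direction `β t − u₀`,
then wherever `‖β t‖ ≥ 10N` the angle `θ t` between `β t` and `β' t` satisfies
`cos (θ t) ≥ 0.9 cos (2ε) − 0.1 > 1/2`, hence `θ t < π/3`. -/
theorem cone_angle_estimate
    (c b N ε : ℝ) (hcb : c ≤ b) (hN : 0 < N) (hε : 0 < ε) (hε' : ε < π / 8)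
    (u₀ : EuclideanSpace ℝ (Fin 3)) (hu₀ : ‖u₀‖ < N)
    (β β' : ℝ → EuclideanSpace ℝ (Fin 3))
    (hderiv : ∀ t ∈ Icc c b, HasDerivWithinAt β (β' t) (Icc c b) t)
    (hβc : β c = u₀)
    (hβ'ne : ∀ t ∈ Icc c b, β' t ≠ 0)
    (hangle : ∀ t ∈ Icc c b, β t ≠ u₀ → angle (β' t) (β t - u₀) ≤ 2 * ε) :
    ∀ t ∈ Icc c b, 10 * N ≤ ‖β t‖ →
      0.9 * Real.cos (2 * ε) - 0.1 ≤ Real.cos (angle (β t) (β' t)) ∧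
      (1 : ℝ) / 2 < 0.9 * Real.cos (2 * ε) - 0.1 ∧
      angle (β t) (β' t) < π / 3 :=
  cone_angle_estimate_general c b N ε hε hε' u₀ hu₀ β β' hβ'ne hangle
end

section
/- Let u, v ∈ ℝ³ be distinct points and ε > 0, and let Δ be the isoceles triangle in a plane containing the segment e(u,v), with base e(u,v) and height ε. If θ = arctan(2ε/‖v − u‖), then Δ is contained in the intersection of the two solid cones C(θ', u, v − u) and C(θ', v, u − v) for any θ' ≥ θ; in particular for θ' = 2ε/‖v − u‖. -/
open Set InnerProductGeometry Real

/-!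
Write the apex as `midpoint u v + h` with `h ⊥ v - u` and `‖h‖ = ε`. A point `q ≠ u` of the
triangle lies on a ray from `u` through a point `p` of the opposite side, and along that side
`p - u = (1 - s/2) • (v - u) + s • h` with `s ∈ [0, 1]`. By Pythagoras the angle at `u` is
`arctan (s ‖h‖ / ((1 - s/2) ‖v - u‖))`, which is largest at the apex `s = 1`. The vertex `v`
is handled by exchanging `u` and `v`, and `arctan x ≤ x` comes from `x ≤ tan x`.
-/

theorem Real.arctan_le_self {x : ℝ} (hx : 0 ≤ x) : arctan x ≤ x := by
  simpa using le_tan (arctan_nonneg.mpr hx) (arctan_lt_pi_div_two x)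

namespace InnerProductGeometry

variable {V : Type*} [NormedAddCommGroup V] [InnerProductSpace ℝ V]

theorem angle_smul_add_eq_arctan_of_inner_eq_zero {x y : V} (h : inner ℝ x y = 0) (hx : x ≠ 0)
    {a : ℝ} (ha : 0 < a) : angle (a • x + y) x = arctan (‖y‖ / (a * ‖x‖)) := by
  have hax : inner ℝ (a • x) y = 0 := by rw [real_inner_smul_left, h, mul_zero]
  rw [angle_comm, ← angle_smul_left_of_pos x _ ha,
    angle_add_eq_arctan_of_inner_eq_zero hax (smul_ne_zero ha.ne' hx), norm_smul,
    Real.norm_of_nonneg ha.le]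

theorem angle_sub_le_arctan_of_mem_segment {u v h p : V} (huv : u ≠ v)
    (hperp : inner ℝ h (v - u) = 0) (hp : p ∈ segment ℝ v (midpoint ℝ u v + h)) :
    angle (p - u) (v - u) ≤ arctan (2 * ‖h‖ / ‖v - u‖) := by
  rw [segment_eq_image'] at hp
  obtain ⟨s, ⟨hs₀, hs₁⟩, rfl⟩ := hp
  have hvu : 0 < ‖v - u‖ := norm_pos_iff.mpr (sub_ne_zero.mpr huv.symm)
  have hdecomp : v + s • (midpoint ℝ u v + h - v) - u = (1 - s / 2) • (v - u) + s • h := by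
    rw [midpoint_eq_smul_add, invOf_eq_inv]
    module
  have hsh : inner ℝ (v - u) (s • h) = 0 := by
    rw [real_inner_smul_right, real_inner_comm, hperp, mul_zero]
  rw [hdecomp, angle_smul_add_eq_arctan_of_inner_eq_zero hsh (sub_ne_zero.mpr huv.symm)
    (by linarith), norm_smul, Real.norm_of_nonneg hs₀]
  gcongr arctan ?_
  rw [div_le_div_iff₀ (by nlinarith) hvu]
  nlinarith [mul_nonneg (mul_nonneg (sub_nonneg.mpr hs₁) (norm_nonneg h)) hvu.le]

theorem angle_sub_le_arctan_of_mem_convexHull {u v h q : V} (huv : u ≠ v)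
    (hperp : inner ℝ h (v - u) = 0) (hq : q ∈ convexHull ℝ {u, v, midpoint ℝ u v + h})
    (hqu : q ≠ u) : angle (q - u) (v - u) ≤ arctan (2 * ‖h‖ / ‖v - u‖) := by
  rw [convexHull_insert (insert_nonempty _ _), convexHull_pair, convexJoin_singleton_left,
    mem_iUnion₂] at hq
  obtain ⟨p, hp, hqp⟩ := hq
  rw [segment_eq_image'] at hqp
  obtain ⟨t, ⟨ht₀, -⟩, rfl⟩ := hqp
  have ht : 0 < t := ht₀.lt_of_ne (by rintro rfl; simp at hqu)
  rw [add_sub_cancel_left, angle_smul_left_of_pos _ _ ht]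
  exact angle_sub_le_arctan_of_mem_segment huv hperp hp

end InnerProductGeometry

/-- An isoceles triangle with base the segment from `u` to `v` and height `ε` (apex at the
midpoint displaced by `ε` in a direction perpendicular to `v − u`) is contained in both
solid cones of half-angle `θ' ≥ arctan (2ε/‖v − u‖)` with vertices `u, v` and axes
`v − u, u − v`; in particular this applies to `θ' = 2ε/‖v − u‖`. -/
theorem triangle_in_cones
    (u v : EuclideanSpace ℝ (Fin 3)) (huv : u ≠ v) (ε : ℝ) (hε : 0 < ε)
    (w : EuclideanSpace ℝ (Fin 3)) (hw : ‖w‖ = 1) (hperp : inner ℝ w (v - u) = (0 : ℝ))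
    (θ' : ℝ) (hθ' : Real.arctan (2 * ε / ‖v - u‖) ≤ θ') :
    Real.arctan (2 * ε / ‖v - u‖) ≤ 2 * ε / ‖v - u‖ ∧
    ∀ q ∈ convexHull ℝ {u, v, midpoint ℝ u v + ε • w},
      (q = u ∨ angle (q - u) (v - u) ≤ θ') ∧
      (q = v ∨ angle (q - v) (u - v) ≤ θ') := by
  have hheight : ‖ε • w‖ = ε := by rw [norm_smul, hw, mul_one, Real.norm_of_nonneg hε.le]
  have hperp_u : inner ℝ (ε • w) (v - u) = 0 := by rw [real_inner_smul_left, hperp, mul_zero]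
  have hperp_v : inner ℝ (ε • w) (u - v) = 0 := by
    rw [← neg_sub, inner_neg_right, hperp_u, neg_zero]
  refine ⟨arctan_le_self (by positivity), fun q hq => ⟨?_, ?_⟩⟩
  · refine or_iff_not_imp_left.mpr fun hqu => ?_
    have hangle := angle_sub_le_arctan_of_mem_convexHull huv hperp_u hq hqu
    rw [hheight] at hangle
    exact hangle.trans hθ'
  · refine or_iff_not_imp_left.mpr fun hqv => ?_
    rw [insert_comm, midpoint_comm] at hq
    have hangle := angle_sub_le_arctan_of_mem_convexHull huv.symm hperp_v hq hqv
    rw [hheight, norm_sub_rev] at hangle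
    exact hangle.trans hθ'
end

section
/- Let v₁, …, vₙ ∈ ℝ³ (n ≥ 4) be the vertices of a closed polygon with edges eᵢ = e(vᵢ, vᵢ₊₁) (indices mod n), and let d > 0 be a lower bound for the distance between any two non-adjacent edges. If v'ᵢ ∈ ℝ³ satisfy ‖vᵢ − v'ᵢ‖ < r with r < d/4, then for each i the midpoint mᵢ of eᵢ has distance at least d/2 = 2r from every edge eⱼ with j ≠ i, and the plane disk Dᵢ of radius r centered at mᵢ perpendicular to eᵢ is disjoint from every segment e(v'ⱼ, vⱼ) and meets the polygonal loop through v'₁, v₁, v'₂, v₂, …, v'ₙ, vₙ in exactly one point, lying on the segment e(vᵢ, v'ᵢ₊₁). -/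
/-!
Only the edges adjacent to `eᵢ` need an argument for the bound `d / 2`: for `e(y, z)` adjacent
to `e(x, y)`, the midpoint of `e(x, y)` and a point of `e(y, z)` are the image, under a
homothety of ratio at least `1/2`, of `x` and a point of `e(y, z)`, or of a point of `e(x, y)`
and `z`; both pairs are at distance at least `d`.

Every segment of the perturbed loop other than `e(vᵢ, v'ᵢ₊₁)` lies within `r` of a vertex or of
an edge other than `eᵢ`, so it misses `Dᵢ`. Along `e(vᵢ, v'ᵢ₊₁)` the signed distance to the plane
of `Dᵢ` is affine, negative at `vᵢ` and positive at `v'ᵢ₊₁`, hence has a single zero; there the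
offset from `mᵢ` is orthogonal to `eᵢ`, which bounds its length by `‖v'ᵢ₊₁ - vᵢ₊₁‖ < r`.
-/

open Set

section Segment

variable {V : Type*} [NormedAddCommGroup V] [NormedSpace ℝ V]

theorem add_smul_sub_mem_segment {a b : V} {t : ℝ} (ht : t ∈ Icc (0 : ℝ) 1) :
    a + t • (b - a) ∈ segment ℝ a b := by
  rw [segment_eq_image']
  exact ⟨t, ht, rfl⟩

theorem dist_le_dist_of_mem_segment {a b q : V} (hq : q ∈ segment ℝ a b) :
    dist q b ≤ dist a b := by
  linarith [dist_add_dist_of_mem_segment hq, dist_nonneg (x := a) (y := q)]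

theorem exists_mem_segment_dist_le {a b b' q : V} (hq : q ∈ segment ℝ a b') :
    ∃ q₀ ∈ segment ℝ a b, dist q q₀ ≤ dist b' b := by
  rw [segment_eq_image'] at hq
  obtain ⟨t, ht, rfl⟩ := hq
  refine ⟨a + t • (b - a), add_smul_sub_mem_segment ht, ?_⟩
  rw [dist_eq_norm, dist_eq_norm, show a + t • (b' - a) - (a + t • (b - a)) = t • (b' - b) by
    module, norm_smul, Real.norm_of_nonneg ht.1]
  exact mul_le_of_le_one_left (norm_nonneg _) ht.2

theorem half_le_dist_midpoint_of_mem_segment {x y z q : V} {d : ℝ}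
    (hx : ∀ w ∈ segment ℝ y z, d ≤ dist x w) (hz : ∀ p ∈ segment ℝ x y, d ≤ dist p z)
    (hq : q ∈ segment ℝ y z) : d / 2 ≤ dist (midpoint ℝ x y) q := by
  rw [segment_eq_image'] at hq
  obtain ⟨t, ⟨ht0, ht1⟩, rfl⟩ := hq
  dsimp only
  rw [midpoint_eq_smul_add, invOf_eq_inv, dist_eq_norm]
  rcases le_or_gt t 2⁻¹ with ht | ht
  · -- homothety with centre `y` and ratio `1/2`
    have hw := hx (y + (2 * t) • (z - y)) (add_smul_sub_mem_segment ⟨by linarith, by linarith⟩)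
    rw [dist_eq_norm, show x - (y + (2 * t) • (z - y)) =
      (2 : ℝ) • ((2⁻¹ : ℝ) • (x + y) - (y + t • (z - y))) by module, norm_smul,
      Real.norm_of_nonneg zero_le_two] at hw
    linarith
  · -- homothety with centre `z` and ratio `t`
    have hp := hz (x + (1 - (2 * t)⁻¹) • (y - x)) (add_smul_sub_mem_segment
      ⟨by rw [sub_nonneg]; exact inv_le_one_of_one_le₀ (by linarith),
        sub_le_self _ (by positivity)⟩)
    rw [show (2⁻¹ : ℝ) • (x + y) - (y + t • (z - y)) =
      t • (x + (1 - (2 * t)⁻¹) • (y - x) - z) by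
        match_scalars <;> field_simp <;> ring, norm_smul, Real.norm_of_nonneg (by linarith)]
    rw [dist_eq_norm] at hp
    nlinarith [norm_nonneg (x + (1 - (2 * t)⁻¹) • (y - x) - z)]

end Segment

section Orthogonal

variable {V : Type*} [NormedAddCommGroup V] [InnerProductSpace ℝ V]

theorem dist_midpoint_le_of_inner_eq_zero {a b b' q : V} (hq : q ∈ segment ℝ a b')
    (hperp : inner ℝ (q - midpoint ℝ a b) (b - a) = 0) :
    dist q (midpoint ℝ a b) ≤ dist b' b := by
  rw [segment_eq_image'] at hq
  obtain ⟨t, ⟨ht0, ht1⟩, rfl⟩ := hq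
  have he : a + t • (b' - a) - midpoint ℝ a b = (t - 2⁻¹) • (b - a) + t • (b' - b) := by
    rw [midpoint_eq_smul_add, invOf_eq_inv]
    module
  set e := a + t • (b' - a) - midpoint ℝ a b
  have hsq : ‖e‖ ^ 2 ≤ ‖e‖ * ‖b' - b‖ :=
    calc ‖e‖ ^ 2 = inner ℝ e ((t - 2⁻¹) • (b - a) + t • (b' - b)) := by
          rw [← he, real_inner_self_eq_norm_sq]
      _ = t * inner ℝ e (b' - b) := by
          rw [inner_add_right, real_inner_smul_right, real_inner_smul_right, hperp]
          ring
      _ ≤ t * (‖e‖ * ‖b' - b‖) := mul_le_mul_of_nonneg_left (real_inner_le_norm _ _) ht0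
      _ ≤ ‖e‖ * ‖b' - b‖ := mul_le_of_le_one_left (by positivity) ht1
  rw [dist_eq_norm, dist_eq_norm]
  nlinarith [norm_nonneg e, norm_nonneg (b' - b)]

theorem existsUnique_mem_segment_inner_sub_midpoint_eq_zero {a b b' : V}
    (h : 2 * dist b' b < dist b a) :
    ∃! q, q ∈ segment ℝ a b' ∧ inner ℝ (q - midpoint ℝ a b) (b - a) = 0 := by
  rw [dist_eq_norm, dist_eq_norm] at h
  have hcu : inner ℝ (b' - a) (b - a) = ‖b - a‖ ^ 2 + inner ℝ (b' - b) (b - a) := by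
    rw [show b' - a = (b - a) + (b' - b) by abel, inner_add_left, real_inner_self_eq_norm_sq]
  set u := b - a
  set c := inner ℝ (b' - a) u
  have hkey (t : ℝ) :
      inner ℝ (a + t • (b' - a) - midpoint ℝ a b) u = t * c - ‖u‖ ^ 2 / 2 := by
    rw [show a + t • (b' - a) - midpoint ℝ a b = t • (b' - a) - (2⁻¹ : ℝ) • u by
      rw [midpoint_eq_smul_add, invOf_eq_inv]; module, inner_sub_left, real_inner_smul_left,
      real_inner_smul_left, real_inner_self_eq_norm_sq]
    ring
  have hu : 0 < ‖u‖ := by linarith [norm_nonneg (b' - b)]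
  have hc : ‖u‖ ^ 2 / 2 < c := by
    nlinarith [neg_abs_le (inner ℝ (b' - b) u), abs_real_inner_le_norm (b' - b) u]
  have hc0 : 0 < c := by linarith [pow_pos hu 2]
  refine ⟨a + (‖u‖ ^ 2 / (2 * c)) • (b' - a),
    ⟨add_smul_sub_mem_segment ⟨by positivity, ?_⟩, ?_⟩, ?_⟩
  · rw [div_le_one (by positivity)]
    linarith
  · rw [hkey]
    field_simp
    ring
  · rintro q ⟨hq, hperp⟩
    rw [segment_eq_image'] at hq
    obtain ⟨t, -, rfl⟩ := hq
    rw [hkey] at hperp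
    congr 2
    field_simp
    linarith

end Orthogonal

theorem ZMod.natCast_ne_zero_of_pos_of_lt {n k : ℕ} (hk : 0 < k) (hkn : k < n) :
    (k : ZMod n) ≠ 0 := by
  rw [Ne, ZMod.natCast_eq_zero_iff]
  exact Nat.not_dvd_of_pos_of_lt hk hkn

section Polygon

variable {V : Type*} [NormedAddCommGroup V] [NormedSpace ℝ V] {n : ℕ} {v v' : ZMod n → V}
  {d r : ℝ}

def EdgesSeparated (v : ZMod n → V) (d : ℝ) : Prop :=
  ∀ i j : ZMod n, j ≠ i → j ≠ i + 1 → i ≠ j + 1 →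
    ∀ p ∈ segment ℝ (v i) (v (i + 1)), ∀ q ∈ segment ℝ (v j) (v (j + 1)), d ≤ dist p q

theorem right_mem_segment_sub_one (v : ZMod n → V) (i : ZMod n) :
    v i ∈ segment ℝ (v (i - 1)) (v (i - 1 + 1)) := by
  rw [sub_add_cancel]
  exact right_mem_segment ℝ _ _

namespace EdgesSeparated

variable (hsep : EdgesSeparated v d) (hn : 4 ≤ n)
include hsep hn

theorem le_dist_of_eq_add_two {i j : ZMod n} (hij : j = i + 2) {p q : V}
    (hp : p ∈ segment ℝ (v i) (v (i + 1))) (hq : q ∈ segment ℝ (v j) (v (j + 1))) :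
    d ≤ dist p q := by
  have hk (k : ℕ) (hk0 : 0 < k) (hk4 : k < 4) : (k : ZMod n) ≠ 0 :=
    ZMod.natCast_ne_zero_of_pos_of_lt hk0 (by omega)
  subst hij
  refine hsep i (i + 2) ?_ ?_ ?_ p hp q hq
  · exact fun h => hk 2 (by norm_num) (by norm_num) (by push_cast; linear_combination h)
  · exact fun h => hk 1 (by norm_num) (by norm_num) (by push_cast; linear_combination h)
  · exact fun h => hk 3 (by norm_num) (by norm_num) (by push_cast; linear_combination -h)

theorem le_dist_succ (i : ZMod n) : d ≤ dist (v i) (v (i + 1)) :=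
  hsep.le_dist_of_eq_add_two hn (i := i - 1) (by ring) (right_mem_segment_sub_one v i)
    (left_mem_segment ℝ _ _)

theorem half_le_dist_midpoint {i j : ZMod n} (hji : j ≠ i) {q : V}
    (hq : q ∈ segment ℝ (v j) (v (j + 1))) :
    d / 2 ≤ dist (midpoint ℝ (v i) (v (i + 1))) q := by
  by_cases hj : j = i + 1
  · subst hj
    refine half_le_dist_midpoint_of_mem_segment (fun w hw => ?_) (fun p hp => ?_) hq
    · exact hsep.le_dist_of_eq_add_two hn (i := i - 1) (by ring)
        (right_mem_segment_sub_one v i) hw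
    · exact hsep.le_dist_of_eq_add_two hn (j := i + 1 + 1) (by ring) hp (left_mem_segment ℝ _ _)
  by_cases hi : i = j + 1
  · subst hi
    rw [midpoint_comm]
    rw [segment_symm] at hq
    refine half_le_dist_midpoint_of_mem_segment (fun w hw => ?_) (fun p hp => ?_) hq
    · rw [dist_comm]
      exact hsep.le_dist_of_eq_add_two hn (j := j + 1 + 1) (by ring) (by rwa [segment_symm])
        (left_mem_segment ℝ _ _)
    · rw [dist_comm]
      exact hsep.le_dist_of_eq_add_two hn (i := j - 1) (j := j + 1) (by ring)
        (right_mem_segment_sub_one v j) (by rwa [segment_symm])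
  have := hsep i j hji hj hi _ (midpoint_mem_segment _ _) q hq
  linarith [dist_nonneg (x := midpoint ℝ (v i) (v (i + 1))) (y := q)]

theorem half_le_dist_midpoint_vertex (i j : ZMod n) :
    d / 2 ≤ dist (midpoint ℝ (v i) (v (i + 1))) (v j) := by
  obtain rfl | hji := eq_or_ne j i
  · have : Fact (1 < n) := ⟨by omega⟩
    exact hsep.half_le_dist_midpoint hn (by simp : j - 1 ≠ j)
      (right_mem_segment_sub_one v j)
  · exact hsep.half_le_dist_midpoint hn hji (left_mem_segment ℝ _ _)

variable (hv' : ∀ i, ‖v i - v' i‖ < r) (hrd : r < d / 4)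
include hv' hrd

theorem lt_dist_midpoint_of_mem_segment_to_vertex (i j : ZMod n) {q : V}
    (hq : q ∈ segment ℝ (v' j) (v j)) : r < dist q (midpoint ℝ (v i) (v (i + 1))) := by
  have hqv : dist q (v j) < r := by
    refine (dist_le_dist_of_mem_segment hq).trans_lt ?_
    rw [dist_comm, dist_eq_norm]
    exact hv' j
  linarith [hsep.half_le_dist_midpoint_vertex hn i j,
    dist_triangle (midpoint ℝ (v i) (v (i + 1))) q (v j),
    dist_comm q (midpoint ℝ (v i) (v (i + 1)))]

theorem mem_segment_of_mem_loop {i : ZMod n} {q : V}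
    (hqm : dist q (midpoint ℝ (v i) (v (i + 1))) ≤ r)
    (hq : q ∈ ⋃ j, segment ℝ (v' j) (v j) ∪ segment ℝ (v j) (v' (j + 1))) :
    q ∈ segment ℝ (v i) (v' (i + 1)) := by
  obtain ⟨j, hj | hj⟩ := mem_iUnion.1 hq
  · exact absurd hqm (hsep.lt_dist_midpoint_of_mem_segment_to_vertex hn hv' hrd i j hj).not_ge
  obtain rfl | hji := eq_or_ne j i
  · exact hj
  obtain ⟨q₀, hq₀, hqq₀⟩ := exists_mem_segment_dist_le (b := v (j + 1)) hj
  have hv'j : dist (v' (j + 1)) (v (j + 1)) < r := by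
    rw [dist_comm, dist_eq_norm]
    exact hv' (j + 1)
  linarith [hsep.half_le_dist_midpoint hn hji hq₀,
    dist_triangle (midpoint ℝ (v i) (v (i + 1))) q q₀, dist_comm q (midpoint ℝ (v i) (v (i + 1)))]

end EdgesSeparated

end Polygon

theorem meridian_disk_meets_loop_once_general
    (n : ℕ) (hn : 4 ≤ n)
    (v v' : ZMod n → EuclideanSpace ℝ (Fin 3))
    (d r : ℝ) (hrd : r < d / 4)
    (hsep : ∀ i j : ZMod n, j ≠ i → j ≠ i + 1 → i ≠ j + 1 →
      ∀ p ∈ segment ℝ (v i) (v (i + 1)), ∀ q ∈ segment ℝ (v j) (v (j + 1)),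
        d ≤ dist p q)
    (hv' : ∀ i : ZMod n, ‖v i - v' i‖ < r) :
    ∀ i : ZMod n,
      (∀ j : ZMod n, j ≠ i →
        ∀ q ∈ segment ℝ (v j) (v (j + 1)), d / 2 ≤ dist (midpoint ℝ (v i) (v (i + 1))) q) ∧
      (let D : Set (EuclideanSpace ℝ (Fin 3)) :=
        {q | dist q (midpoint ℝ (v i) (v (i + 1))) ≤ r ∧
             inner ℝ (q - midpoint ℝ (v i) (v (i + 1))) (v (i + 1) - v i) = (0 : ℝ)}
       let loop : Set (EuclideanSpace ℝ (Fin 3)) :=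
        ⋃ j : ZMod n, segment ℝ (v' j) (v j) ∪ segment ℝ (v j) (v' (j + 1))
       (∀ j : ZMod n, ∀ q ∈ segment ℝ (v' j) (v j), q ∉ D) ∧
       (∃! q : EuclideanSpace ℝ (Fin 3), q ∈ D ∩ loop) ∧
       (∀ q ∈ D ∩ loop, q ∈ segment ℝ (v i) (v' (i + 1)))) := by
  have hsep : EdgesSeparated v d := hsep
  intro i
  have hv'i : dist (v' (i + 1)) (v (i + 1)) < r := by
    rw [dist_comm, dist_eq_norm]
    exact hv' (i + 1)
  have hshort : 2 * dist (v' (i + 1)) (v (i + 1)) < dist (v (i + 1)) (v i) := by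
    linarith [hsep.le_dist_succ hn i, dist_comm (v i) (v (i + 1)),
      dist_nonneg (x := v i) (y := v (i + 1))]
  obtain ⟨q, ⟨hq, hperp⟩, huniq⟩ := existsUnique_mem_segment_inner_sub_midpoint_eq_zero hshort
  refine ⟨fun j hj q hq => hsep.half_le_dist_midpoint hn hj hq, ?_⟩
  intro D loop
  have hon : ∀ p ∈ D ∩ loop, p ∈ segment ℝ (v i) (v' (i + 1)) := fun p hp =>
    hsep.mem_segment_of_mem_loop hn hv' hrd hp.1.1 hp.2
  have hqD : q ∈ D ∩ loop :=
    ⟨⟨(dist_midpoint_le_of_inner_eq_zero hq hperp).trans hv'i.le, hperp⟩,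
      mem_iUnion.2 ⟨i, Or.inr hq⟩⟩
  exact ⟨fun j p hp hpD =>
    (hsep.lt_dist_midpoint_of_mem_segment_to_vertex hn hv' hrd i j hp).not_ge hpD.1,
    ⟨q, hqD, fun p hp => huniq p ⟨hon p hp, hp.1.2⟩⟩, hon⟩

/-- Geometric core of Lemma 1: for a closed polygon with vertices `v i` (`i ∈ ZMod n`,
`n ≥ 4`) whose non-adjacent edges are at distance at least `d`, and perturbed vertices
`v'` with `‖v i − v' i‖ < r < d/4`: the midpoint `m i` of edge `e i` is at distance at
least `d/2` from every other edge; the perpendicular disk `D i` of radius `r` at `m i`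
misses all segments `e(v' j, v j)`, and meets the polygonal loop through
`v'₁, v₁, …, v'ₙ, vₙ` in exactly one point, which lies on the segment `e(v i, v' (i+1))`. -/
theorem meridian_disk_meets_loop_once
    (n : ℕ) (hn : 4 ≤ n)
    (v v' : ZMod n → EuclideanSpace ℝ (Fin 3))
    (d r : ℝ) (hd : 0 < d) (hr : 0 < r) (hrd : r < d / 4)
    (hsep : ∀ i j : ZMod n, j ≠ i → j ≠ i + 1 → i ≠ j + 1 →
      ∀ p ∈ segment ℝ (v i) (v (i + 1)), ∀ q ∈ segment ℝ (v j) (v (j + 1)),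
        d ≤ dist p q)
    (hv' : ∀ i : ZMod n, ‖v i - v' i‖ < r) :
    ∀ i : ZMod n,
      (∀ j : ZMod n, j ≠ i →
        ∀ q ∈ segment ℝ (v j) (v (j + 1)), d / 2 ≤ dist (midpoint ℝ (v i) (v (i + 1))) q) ∧
      (let D : Set (EuclideanSpace ℝ (Fin 3)) :=
        {q | dist q (midpoint ℝ (v i) (v (i + 1))) ≤ r ∧
             inner ℝ (q - midpoint ℝ (v i) (v (i + 1))) (v (i + 1) - v i) = (0 : ℝ)}
       let loop : Set (EuclideanSpace ℝ (Fin 3)) :=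
        ⋃ j : ZMod n, segment ℝ (v' j) (v j) ∪ segment ℝ (v j) (v' (j + 1))
       (∀ j : ZMod n, ∀ q ∈ segment ℝ (v' j) (v j), q ∉ D) ∧
       (∃! q : EuclideanSpace ℝ (Fin 3), q ∈ D ∩ loop) ∧
       (∀ q ∈ D ∩ loop, q ∈ segment ℝ (v i) (v' (i + 1)))) :=
  meridian_disk_meets_loop_once_general n hn v v' d r hrd hsep hv'
end

section
/- Let β : [a,b] → ℝ³ be a C¹ curve contained in the closed ball B(R) of radius R centered at the origin with ‖β(b)‖ = R, and suppose the angle θ between β(b) and β'(b) satisfies θ + ε < π/2 for some ε > 0. Then the solid cone C(ε, β(b), β'(b)) intersects B(R) only at its vertex β(b). -/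
open Set InnerProductGeometry Real RealInnerProductSpace

variable {E : Type*} [NormedAddCommGroup E] [InnerProductSpace ℝ E]

lemma perp_sq_aux (u d : E) (hd : ‖d‖ = 1) :
    ‖u - ⟪u, d⟫ • d‖ ^ 2 = ‖u‖ ^ 2 - ⟪u, d⟫ ^ 2 := by
  have hdd : ⟪d, d⟫ = 1 := by rw [real_inner_self_eq_norm_sq, hd]; norm_num
  rw [← real_inner_self_eq_norm_sq]
  simp only [inner_sub_left, inner_sub_right, real_inner_smul_left, real_inner_smul_right,
    real_inner_comm u d, hdd]
  rw [real_inner_self_eq_norm_sq]; ring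

lemma sin_angle_mul_aux (u d : E) (hd : ‖d‖ = 1) (hu : u ≠ 0) :
    Real.sin (angle u d) * ‖u‖ = ‖u - ⟪u, d⟫ • d‖ := by
  have hun : (0:ℝ) < ‖u‖ := norm_pos_iff.mpr hu
  have hcos : Real.cos (angle u d) = ⟪u, d⟫ / ‖u‖ := by rw [cos_angle, hd, mul_one]
  have hsc : Real.sin (angle u d) ^ 2 + Real.cos (angle u d) ^ 2 = 1 := Real.sin_sq_add_cos_sq _
  have hsin : 0 ≤ Real.sin (angle u d) :=
    Real.sin_nonneg_of_nonneg_of_le_pi (angle_nonneg u d) (angle_le_pi u d)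
  rw [← pow_left_inj₀ (by positivity) (norm_nonneg _) two_ne_zero]
  rw [perp_sq_aux u d hd, mul_pow]
  have : Real.sin (angle u d) ^ 2 = 1 - (⟪u, d⟫ / ‖u‖) ^ 2 := by rw [← hcos]; linarith
  rw [this]
  field_simp

lemma inner_pos_of_angles (u v d : E) (hd : ‖d‖ = 1) (hu : u ≠ 0) (hv : v ≠ 0)
    (h : angle u d + angle v d < π / 2) : 0 < ⟪u, v⟫ := by
  have hun : (0:ℝ) < ‖u‖ := norm_pos_iff.mpr hu
  have hvn : (0:ℝ) < ‖v‖ := norm_pos_iff.mpr hv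
  have hcu : Real.cos (angle u d) * ‖u‖ = ⟪u, d⟫ := by
    rw [cos_angle, hd, mul_one]; field_simp
  have hcv : Real.cos (angle v d) * ‖v‖ = ⟪v, d⟫ := by
    rw [cos_angle, hd, mul_one]; field_simp
  have hsu := sin_angle_mul_aux u d hd hu
  have hsv := sin_angle_mul_aux v d hd hv
  have hexp : ⟪u - ⟪u, d⟫ • d, v - ⟪v, d⟫ • d⟫ = ⟪u, v⟫ - ⟪u, d⟫ * ⟪v, d⟫ := by
    have hdd : ⟪d, d⟫ = 1 := by rw [real_inner_self_eq_norm_sq, hd]; norm_num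
    simp only [inner_sub_left, inner_sub_right, real_inner_smul_left, real_inner_smul_right,
      real_inner_comm v d, hdd]
    ring
  have hcs : -(‖u - ⟪u, d⟫ • d‖ * ‖v - ⟪v, d⟫ • d‖) ≤ ⟪u, v⟫ - ⟪u, d⟫ * ⟪v, d⟫ := by
    rw [← hexp]
    linarith [abs_real_inner_le_norm (u - ⟪u, d⟫ • d) (v - ⟪v, d⟫ • d),
      neg_abs_le (⟪u - ⟪u, d⟫ • d, v - ⟪v, d⟫ • d⟫)]
  have hcospos : 0 < Real.cos (angle u d + angle v d) :=
    Real.cos_pos_of_mem_Ioo ⟨by nlinarith [angle_nonneg u d, angle_nonneg v d, Real.pi_pos], h⟩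
  have hkey : Real.cos (angle u d + angle v d) * (‖u‖ * ‖v‖) ≤ ⟪u, v⟫ := by
    rw [Real.cos_add]
    have heq : (Real.cos (angle u d) * Real.cos (angle v d)
        - Real.sin (angle u d) * Real.sin (angle v d)) * (‖u‖ * ‖v‖)
        = (Real.cos (angle u d) * ‖u‖) * (Real.cos (angle v d) * ‖v‖)
          - (Real.sin (angle u d) * ‖u‖) * (Real.sin (angle v d) * ‖v‖) := by ring
    rw [heq, hcu, hcv, hsu, hsv]
    linarith
  nlinarith [mul_pos hun hvn]

/-- Cone-disjointness verification in Lemma 5: if a C¹ curve stays in the closed ball of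
radius `R`, ends on its boundary (`‖β b‖ = R`), and the angle `θ` between `β b` and the
end tangent `β'b` satisfies `θ + ε < π/2`, then the solid cone `C(ε, β b, β'b)` meets
the ball only at its vertex `β b`. -/
theorem cone_meets_ball_only_at_vertex
    (a b R ε : ℝ) (hab : a ≤ b) (hR : 0 < R) (hε : 0 < ε)
    (β : ℝ → EuclideanSpace ℝ (Fin 3)) (β'b : EuclideanSpace ℝ (Fin 3))
    (hderiv : HasDerivWithinAt β β'b (Icc a b) b)
    (hβ'ne : β'b ≠ 0)
    (hball : ∀ t ∈ Icc a b, ‖β t‖ ≤ R) (hend : ‖β b‖ = R)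
    (hangle : angle (β b) β'b + ε < π / 2) :
    ∀ w : EuclideanSpace ℝ (Fin 3),
      (w = β b ∨ angle (w - β b) β'b ≤ ε) → ‖w‖ ≤ R → w = β b := by
  intro w hw hwR
  rcases hw with h | h
  · exact h
  by_contra hne
  have hu : β b ≠ 0 := by
    intro h0; rw [h0, norm_zero] at hend; exact absurd hend.symm (ne_of_gt hR)
  have hv : w - β b ≠ 0 := sub_ne_zero.mpr hne
  set d : EuclideanSpace ℝ (Fin 3) := ‖β'b‖⁻¹ • β'b with hd_def
  have hβn : (0:ℝ) < ‖β'b‖ := norm_pos_iff.mpr hβ'ne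
  have hd : ‖d‖ = 1 := by
    rw [hd_def, norm_smul, norm_inv, norm_norm, inv_mul_cancel₀ (ne_of_gt hβn)]
  have had : ∀ x : EuclideanSpace ℝ (Fin 3), angle x d = angle x β'b := fun x =>
    angle_smul_right_of_pos x β'b (inv_pos.mpr hβn)
  have hsum : angle (β b) d + angle (w - β b) d < π / 2 := by
    rw [had, had]; linarith
  have hpos := inner_pos_of_angles (β b) (w - β b) d hd hu hv hsum
  have hwsq : ‖w‖ ^ 2 = ‖β b‖ ^ 2 + 2 * ⟪β b, w - β b⟫ + ‖w - β b‖ ^ 2 := by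
    have : w = β b + (w - β b) := by abel
    rw [this]
    rw [@norm_add_sq_real]; simp
  have h1 : ‖w‖ ^ 2 ≤ R ^ 2 := by nlinarith [norm_nonneg w]
  have h2 : (0:ℝ) ≤ ‖w - β b‖ ^ 2 := by positivity
  rw [hend] at hwsq
  nlinarith
end
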